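/- Let X be a topological space (or more generally a set with a notion of sequential convergence satisfying: convergence is preserved by subsequences, and if x_k does not converge to x, then there is a subsequence of (x_k) no further subsequence of which converges to x). Let F_k : [a,b] → X, k ∈ ℕ, be such that: (1) for a.e. t ∈ [a,b] and for every strictly increasing sequence (k_l) ⊂ ℕ there exist F_t ∈ X and a further subsequence (k'_l) with F_{k'_l}(t) → F_t; and (2) whenever a strictly increasing sequence (k_l) satisfies F_{k_l}(t₁) → F_{t₁} and F_{k_l}(t₂) → F_{t₂}, then F_{t₁} = F_{t₂}. Then there exist F ∈ X and a strictly increasing sequence (k_l) such that F_{k_l}(t) → F for a.e. t ∈ [a,b]. -/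
import Mathlib


open MeasureTheory Set Filter

/-- Abstract selection lemma: let `Conv` be a notion of convergence of sequences in `X`
which passes to subsequences, and such that non-convergence to `x` produces a subsequence
none of whose further subsequences converges to `x`. If for a.e. `t ∈ [a,b]` every
subsequence of `(F k t)` has a further subsequence converging to some limit, and limits
along a common subsequence agree for different slices, then there is a single limit `F`
and a subsequence along which `F (k l) t → F` for a.e. `t`. -/
theorem stmt_1 {X : Type*} (Conv : (ℕ → X) → X → Prop)
    (hsub : ∀ (x : ℕ → X) (l : X) (φ : ℕ → ℕ), StrictMono φ →
      Conv x l → Conv (x ∘ φ) l)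
    (hdiv : ∀ (x : ℕ → X) (l : X), ¬ Conv x l →
      ∃ φ : ℕ → ℕ, StrictMono φ ∧ ∀ ψ : ℕ → ℕ, StrictMono ψ → ¬ Conv (x ∘ φ ∘ ψ) l)
    (a b : ℝ) (F : ℕ → ℝ → X)
    (h1 : ∀ᵐ t ∂(volume.restrict (Icc a b)), ∀ φ : ℕ → ℕ, StrictMono φ →
      ∃ (Ft : X) (ψ : ℕ → ℕ), StrictMono ψ ∧ Conv (fun l => F (φ (ψ l)) t) Ft)
    (h2 : ∀ (φ : ℕ → ℕ), StrictMono φ → ∀ t₁ ∈ Icc a b, ∀ t₂ ∈ Icc a b,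
      ∀ F₁ F₂ : X, Conv (fun l => F (φ l) t₁) F₁ → Conv (fun l => F (φ l) t₂) F₂ →
        F₁ = F₂) :
    ∃ (Flim : X) (φ : ℕ → ℕ), StrictMono φ ∧
      ∀ᵐ t ∂(volume.restrict (Icc a b)), Conv (fun l => F (φ l) t) Flim := by
  rcases le_or_gt b a with hba | hab
  · -- degenerate case: the interval has measure zero
    refine ⟨F 0 0, id, strictMono_id, ?_⟩
    have hz : volume.restrict (Icc a b) = 0 := by
      rw [Measure.restrict_eq_zero, Real.volume_Icc]
      simp [sub_nonpos.mpr hba]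
    rw [hz]
    simp
  · have hmem : ∀ᵐ t ∂(volume.restrict (Icc a b)), t ∈ Icc a b :=
      ae_restrict_mem measurableSet_Icc
    have hne : volume.restrict (Icc a b) ≠ 0 := by
      rw [Ne, Measure.restrict_eq_zero, Real.volume_Icc]
      simp [ENNReal.ofReal_eq_zero, sub_pos.mpr hab, not_le.mpr]
    haveI : (ae (volume.restrict (Icc a b))).NeBot := ae_neBot.mpr hne
    obtain ⟨t₀, ht₀P, ht₀I⟩ := (h1.and hmem).exists
    obtain ⟨Flim, ψ, hψ, hconv⟩ := ht₀P id strictMono_id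
    refine ⟨Flim, ψ, hψ, ?_⟩
    filter_upwards [h1, hmem] with t htP htI
    by_contra hnc
    obtain ⟨φ', hφ', hno⟩ := hdiv (fun l => F (ψ l) t) Flim hnc
    obtain ⟨Ft, ψ', hψ', hconv'⟩ := htP (ψ ∘ φ') (hψ.comp hφ')
    have h0 : Conv (fun l => F (ψ (φ' (ψ' l))) t₀) Flim :=
      hsub (fun l => F (ψ l) t₀) Flim (φ' ∘ ψ') (hφ'.comp hψ') hconv
    have heq : Flim = Ft :=
      h2 (ψ ∘ φ' ∘ ψ') (hψ.comp (hφ'.comp hψ')) t₀ ht₀I t htI Flim Ft h0 hconv'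
    exact hno ψ' hψ' (heq ▸ hconv')
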